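/- arXiv:1909.00138 — 5 statements merged into one kernel-verified Lean document; each statement's English description precedes it below -/
import Mathlib

section
/- The quantity I₁ = -h x₀² - h x₀x₂ + h² x₀x₂ + h x₀²x₂ - h x₂² + h x₀x₂² is invariant under the map φ: (x₀,x₁,x₂,x₃) ↦ (x₂, x₃, -x₂-x₀+h x₂/(1-x₂), -x₁-x₃+(2-x₂+h x₃)/(1-x₂)²), i.e., for all x₀,x₁,x₂,x₃ ∈ ℂ with x₂ ≠ 1, I₁ evaluated at φ(x₀,x₁,x₂,x₃) equals I₁(x₀,x₁,x₂,x₃). -/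
/-- The map φ reduced from the lattice super-KdV equation. -/
noncomputable def phi (h : ℂ) (p : ℂ × ℂ × ℂ × ℂ) : ℂ × ℂ × ℂ × ℂ :=
  (p.2.2.1, p.2.2.2,
   -p.2.2.1 - p.1 + h * p.2.2.1 / (1 - p.2.2.1),
   -p.2.1 - p.2.2.2 + (2 - p.2.2.1 + h * p.2.2.2) / (1 - p.2.2.1) ^ 2)

/-- The invariant I₁. -/
noncomputable def I1 (h : ℂ) (p : ℂ × ℂ × ℂ × ℂ) : ℂ :=
  -h * p.1 ^ 2 - h * p.1 * p.2.2.1 + h ^ 2 * p.1 * p.2.2.1 + h * p.1 ^ 2 * p.2.2.1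
    - h * p.2.2.1 ^ 2 + h * p.1 * p.2.2.1 ^ 2

theorem I1_invariant (h x0 x1 x2 x3 : ℂ) (hx2 : x2 ≠ 1) :
    I1 h (phi h (x0, x1, x2, x3)) = I1 h (x0, x1, x2, x3) := by
  have hne : (1 : ℂ) - x2 ≠ 0 := sub_ne_zero.mpr (Ne.symm hx2)
  simp only [I1, phi]
  field_simp
  ring
end

section
/- The quantity I₂ = 2h x₀ + x₀² - 2h x₀x₁ + 2h x₂ + x₀x₂ - h x₁x₂ + h² x₁x₂ + 2h x₀x₁x₂ + x₂² + h x₁x₂² - h x₀x₃ + h² x₀x₃ + h x₀²x₃ - 2h x₂x₃ + 2h x₀x₂x₃ is invariant under the map φ: for all x₀,x₁,x₂,x₃ ∈ ℂ with x₂ ≠ 1, I₂(φ(x₀,x₁,x₂,x₃)) = I₂(x₀,x₁,x₂,x₃). -/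
/-- The invariant I₂. -/
noncomputable def I2 (h : ℂ) (p : ℂ × ℂ × ℂ × ℂ) : ℂ :=
  let x0 := p.1; let x1 := p.2.1; let x2 := p.2.2.1; let x3 := p.2.2.2
  2*h*x0 + x0^2 - 2*h*x0*x1 + 2*h*x2 + x0*x2 - h*x1*x2 + h^2*x1*x2
    + 2*h*x0*x1*x2 + x2^2 + h*x1*x2^2 - h*x0*x3 + h^2*x0*x3 + h*x0^2*x3
    - 2*h*x2*x3 + 2*h*x0*x2*x3

theorem I2_invariant (h x0 x1 x2 x3 : ℂ) (hx2 : x2 ≠ 1) :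
    I2 h (phi h (x0, x1, x2, x3)) = I2 h (x0, x1, x2, x3) := by
  have h1 : (1 - x2) ≠ 0 := sub_ne_zero.mpr (Ne.symm hx2)
  have hu : (1 - x2)⁻¹ * (1 - x2) = 1 := inv_mul_cancel₀ h1
  simp only [I2, phi, div_eq_mul_inv, ← inv_pow]
  linear_combination (2*h*x2 + 2*h*x2*((1-x2)⁻¹) + (-1)*h*x2^2*((1-x2)⁻¹) + 4*h*x0 + 4*h*x0*((1-x2)⁻¹) + (-2)*h*x0*x2*((1-x2)⁻¹) + (-2)*h^2*x2*((1-x2)⁻¹) + (-4)*h^2*x2*((1-x2)⁻¹)^2 + 2*h^2*x2*x3 + h^2*x2*x3*((1-x2)⁻¹) + 2*h^2*x2^2*((1-x2)⁻¹)^2 + 2*h^2*x1*x2 + 2*h^2*x0*x3 + 2*h^2*x0*x3*((1-x2)⁻¹) + (-1)*h^3*x2*x3*((1-x2)⁻¹) + (-2)*h^3*x2*x3*((1-x2)⁻¹)^2) * hu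
end

section
/- Consider the 19×19 integer matrix M representing the pull-back action φ* on the Picard lattice ℤH_a ⊕ ℤH_b ⊕ ⊕_{i=1}^{17} ℤE_i given by: H_a ↦ H_b; H_b ↦ H_a + 3H_b - 2E₁ - 3E₁₁ - (E₆+E₇+E₉+E₁₀+E₁₂+E₁₃+E₁₄); E₁ ↦ H_b - E₁ - E₁₀ - E₁₁; E₂ ↦ H_b - E₁ - E₉ - E₁₁; E₃ ↦ H_b - E₁ - E₇ - E₉ - E₁₁ + E₈; E₄ ↦ H_b - E₁ - E₇ - E₁₁; E₅ ↦ H_b - E₁ - E₆ - E₁₁; E₆ ↦ E₁₄; E₇ ↦ E₁₄; E₈ ↦ E₁₅; E₉ ↦ E₁₆; E₁₀ ↦ E₁₇; E₁₁ ↦ E₁ + E₁₁ - E₁₄; E₁₂ ↦ H_b - E₁ - E₁₁ - E₁₃; E₁₃ ↦ H_b - E₁ - E₁₁ - E₁₂; E₁₄ ↦ E₂; E₁₅ ↦ E₃; E₁₆ ↦ E₄; E₁₇ ↦ E₅. Then the entries of Mⁿ grow at most quadratically in n: there is a constant C such that every entry of Mⁿ has absolute value at most C·n² + C for all n ≥ 1.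 -/
/-- Rows of `picRows` are the images of the basis vectors
(H_a, H_b, E_1, ..., E_17) under the pull-back action φ*. -/
def picRows : Fin 19 → Fin 19 → ℤ :=
  ![
    ![0,1,0,0,0,0,0,0,0,0,0,0,0,0,0,0,0,0,0],
    ![1,3,-2,0,0,0,0,-1,-1,0,-1,-1,-3,-1,-1,-1,0,0,0],
    ![0,1,-1,0,0,0,0,0,0,0,0,-1,-1,0,0,0,0,0,0],
    ![0,1,-1,0,0,0,0,0,0,0,-1,0,-1,0,0,0,0,0,0],
    ![0,1,-1,0,0,0,0,0,-1,1,-1,0,-1,0,0,0,0,0,0],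
    ![0,1,-1,0,0,0,0,0,-1,0,0,0,-1,0,0,0,0,0,0],
    ![0,1,-1,0,0,0,0,-1,0,0,0,0,-1,0,0,0,0,0,0],
    ![0,0,0,0,0,0,0,0,0,0,0,0,0,0,0,1,0,0,0],
    ![0,0,0,0,0,0,0,0,0,0,0,0,0,0,0,1,0,0,0],
    ![0,0,0,0,0,0,0,0,0,0,0,0,0,0,0,0,1,0,0],
    ![0,0,0,0,0,0,0,0,0,0,0,0,0,0,0,0,0,1,0],
    ![0,0,0,0,0,0,0,0,0,0,0,0,0,0,0,0,0,0,1],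
    ![0,0,1,0,0,0,0,0,0,0,0,0,1,0,0,-1,0,0,0],
    ![0,1,-1,0,0,0,0,0,0,0,0,0,-1,0,-1,0,0,0,0],
    ![0,1,-1,0,0,0,0,0,0,0,0,0,-1,-1,0,0,0,0,0],
    ![0,0,0,1,0,0,0,0,0,0,0,0,0,0,0,0,0,0,0],
    ![0,0,0,0,1,0,0,0,0,0,0,0,0,0,0,0,0,0,0],
    ![0,0,0,0,0,1,0,0,0,0,0,0,0,0,0,0,0,0,0],
    ![0,0,0,0,0,0,1,0,0,0,0,0,0,0,0,0,0,0,0]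
  ]

/-- The matrix of φ* acting on the Picard lattice ℤ¹⁹ (columns are images of basis vectors). -/
def M : Matrix (Fin 19) (Fin 19) ℤ := Matrix.transpose (Matrix.of picRows)

def P2 : Matrix (Fin 19) (Fin 19) ℤ := Matrix.of ![
    ![1,3,1,1,1,1,1,0,0,0,0,0,0,1,1,0,0,0,0],
    ![3,6,2,2,2,2,2,0,0,0,0,0,1,1,1,1,1,1,1],
    ![-2,-5,-2,-2,-2,-2,-2,0,0,0,0,0,0,-1,-1,-1,-1,-1,-1],
    ![0,-1,0,0,0,0,0,1,1,0,0,0,-1,0,0,0,0,0,0],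
    ![0,0,0,0,0,0,0,0,0,1,0,0,0,0,0,0,0,0,0],
    ![0,0,0,0,0,0,0,0,0,0,1,0,0,0,0,0,0,0,0],
    ![0,0,0,0,0,0,0,0,0,0,0,1,0,0,0,0,0,0,0],
    ![-1,-3,-1,-1,-1,-1,-1,0,0,0,0,0,0,-1,-1,0,0,0,-1],
    ![-1,-3,-1,-1,-1,-1,-1,0,0,0,0,0,0,-1,-1,0,-1,-1,0],
    ![0,0,0,0,0,0,0,0,0,0,0,0,0,0,0,0,1,0,0],
    ![-1,-3,-1,-1,-1,-1,-1,0,0,0,0,0,0,-1,-1,-1,-1,0,0],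
    ![-1,-1,0,0,0,0,0,0,0,0,0,0,-1,0,0,0,0,0,0],
    ![-3,-8,-3,-3,-3,-3,-3,0,0,0,0,0,0,-2,-2,-1,-1,-1,-1],
    ![-1,-2,-1,-1,-1,-1,-1,0,0,0,0,0,0,0,-1,0,0,0,0],
    ![-1,-2,-1,-1,-1,-1,-1,0,0,0,0,0,0,-1,0,0,0,0,0],
    ![-1,-2,0,0,-1,-1,-1,0,0,0,0,0,-1,0,0,0,0,0,0],
    ![0,0,0,0,1,0,0,0,0,0,0,0,0,0,0,0,0,0,0],
    ![0,-1,0,-1,-1,0,0,0,0,0,0,0,0,0,0,0,0,0,0],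
    ![0,-1,-1,0,0,0,0,0,0,0,0,0,0,0,0,0,0,0,0]]

def P3 : Matrix (Fin 19) (Fin 19) ℤ := Matrix.of ![
    ![3,6,2,2,2,2,2,0,0,0,0,0,1,1,1,1,1,1,1],
    ![6,11,3,3,3,3,3,1,1,1,1,1,2,2,2,2,2,2,2],
    ![-5,-10,-3,-3,-3,-3,-3,-1,-1,-1,-1,-1,-1,-2,-2,-2,-2,-2,-2],
    ![-1,-2,0,0,-1,-1,-1,0,0,0,0,0,-1,0,0,0,0,0,0],
    ![0,0,0,0,1,0,0,0,0,0,0,0,0,0,0,0,0,0,0],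
    ![0,-1,0,-1,-1,0,0,0,0,0,0,0,0,0,0,0,0,0,0],
    ![0,-1,-1,0,0,0,0,0,0,0,0,0,0,0,0,0,0,0,0],
    ![-3,-6,-2,-2,-2,-2,-2,0,0,0,0,-1,-1,-1,-1,-1,-1,-1,-1],
    ![-3,-6,-2,-2,-2,-2,-2,0,0,-1,-1,0,-1,-1,-1,-1,-1,-1,-1],
    ![0,0,0,0,0,0,0,0,0,1,0,0,0,0,0,0,0,0,0],
    ![-3,-5,-2,-2,-2,-2,-2,-1,-1,-1,0,0,0,-1,-1,-1,-1,-1,-1],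
    ![-1,-1,0,0,0,0,0,0,0,0,0,0,-1,0,0,0,0,0,0],
    ![-8,-16,-5,-5,-5,-5,-5,-1,-1,-1,-1,-1,-2,-3,-3,-3,-3,-3,-3],
    ![-2,-4,-1,-1,-1,-1,-1,0,0,0,0,0,-1,0,-1,-1,-1,-1,-1],
    ![-2,-4,-1,-1,-1,-1,-1,0,0,0,0,0,-1,-1,0,-1,-1,-1,-1],
    ![-2,-4,-1,-1,-1,-1,-1,0,0,0,0,0,-1,-1,-1,0,-1,-1,-1],
    ![0,0,0,0,0,0,0,0,0,0,0,0,0,0,0,0,1,0,0],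
    ![-1,-3,-1,-1,-1,-1,-1,0,0,0,0,0,0,-1,-1,-1,-1,0,0],
    ![-1,-1,0,0,0,0,0,0,0,0,0,0,-1,0,0,0,0,0,0]]

def P4 : Matrix (Fin 19) (Fin 19) ℤ := Matrix.of ![
    ![6,11,3,3,3,3,3,1,1,1,1,1,2,2,2,2,2,2,2],
    ![11,17,5,5,5,5,5,2,2,2,2,2,3,4,4,3,3,3,3],
    ![-10,-16,-5,-5,-5,-5,-5,-2,-2,-2,-2,-2,-2,-4,-4,-3,-3,-3,-3],
    ![-2,-4,-1,-1,-1,-1,-1,0,0,0,0,0,-1,-1,-1,0,-1,-1,-1],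
    ![0,0,0,0,0,0,0,0,0,0,0,0,0,0,0,0,1,0,0],
    ![-1,-3,-1,-1,-1,-1,-1,0,0,0,0,0,0,-1,-1,-1,-1,0,0],
    ![-1,-1,0,0,0,0,0,0,0,0,0,0,-1,0,0,0,0,0,0],
    ![-6,-10,-2,-3,-3,-3,-3,-1,-1,-1,-1,-1,-2,-2,-2,-2,-2,-2,-2],
    ![-6,-10,-3,-2,-3,-3,-3,-1,-1,-1,-1,-1,-2,-2,-2,-2,-2,-2,-2],
    ![0,0,0,0,1,0,0,0,0,0,0,0,0,0,0,0,0,0,0],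
    ![-5,-9,-3,-3,-3,-2,-2,-1,-1,-1,-1,-1,-1,-2,-2,-2,-2,-2,-2],
    ![-1,-1,0,0,0,0,0,0,0,0,0,0,-1,0,0,0,0,0,0],
    ![-16,-27,-8,-8,-8,-8,-8,-3,-3,-3,-3,-3,-4,-6,-6,-5,-5,-5,-5],
    ![-4,-7,-2,-2,-2,-2,-2,-1,-1,-1,-1,-1,-1,-1,-2,-1,-1,-1,-1],
    ![-4,-7,-2,-2,-2,-2,-2,-1,-1,-1,-1,-1,-1,-2,-1,-1,-1,-1,-1],
    ![-4,-7,-2,-2,-2,-2,-2,0,0,-1,-1,-1,-2,-1,-1,-1,-1,-1,-1],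
    ![0,0,0,0,0,0,0,0,0,1,0,0,0,0,0,0,0,0,0],
    ![-3,-5,-2,-2,-2,-2,-2,-1,-1,-1,0,0,0,-1,-1,-1,-1,-1,-1],
    ![-1,-1,0,0,0,0,0,0,0,0,0,0,-1,0,0,0,0,0,0]]

def P5 : Matrix (Fin 19) (Fin 19) ℤ := Matrix.of ![
    ![11,17,5,5,5,5,5,2,2,2,2,2,3,4,4,3,3,3,3],
    ![17,24,7,7,7,7,7,3,3,3,3,3,5,5,5,5,5,5,5],
    ![-16,-23,-7,-7,-7,-7,-7,-3,-3,-3,-3,-3,-4,-5,-5,-5,-5,-5,-5],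
    ![-4,-7,-2,-2,-2,-2,-2,0,0,-1,-1,-1,-2,-1,-1,-1,-1,-1,-1],
    ![0,0,0,0,0,0,0,0,0,1,0,0,0,0,0,0,0,0,0],
    ![-3,-5,-2,-2,-2,-2,-2,-1,-1,-1,0,0,0,-1,-1,-1,-1,-1,-1],
    ![-1,-1,0,0,0,0,0,0,0,0,0,0,-1,0,0,0,0,0,0],
    ![-10,-16,-5,-5,-5,-5,-5,-2,-2,-2,-2,-2,-2,-4,-4,-3,-3,-3,-3],
    ![-10,-14,-4,-4,-4,-4,-4,-2,-2,-2,-2,-2,-3,-3,-3,-2,-3,-3,-3],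
    ![0,0,0,0,0,0,0,0,0,0,0,0,0,0,0,0,1,0,0],
    ![-9,-13,-4,-4,-4,-4,-4,-2,-2,-2,-2,-2,-2,-3,-3,-3,-3,-2,-2],
    ![-1,-1,0,0,0,0,0,0,0,0,0,0,-1,0,0,0,0,0,0],
    ![-27,-40,-12,-12,-12,-12,-12,-5,-5,-5,-5,-5,-7,-9,-9,-8,-8,-8,-8],
    ![-7,-10,-3,-3,-3,-3,-3,-1,-1,-1,-1,-1,-2,-2,-3,-2,-2,-2,-2],
    ![-7,-10,-3,-3,-3,-3,-3,-1,-1,-1,-1,-1,-2,-3,-2,-2,-2,-2,-2],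
    ![-7,-10,-2,-2,-3,-3,-3,-1,-1,-1,-1,-1,-3,-2,-2,-2,-2,-2,-2],
    ![0,0,0,0,1,0,0,0,0,0,0,0,0,0,0,0,0,0,0],
    ![-5,-9,-3,-3,-3,-2,-2,-1,-1,-1,-1,-1,-1,-2,-2,-2,-2,-2,-2],
    ![-1,-1,0,0,0,0,0,0,0,0,0,0,-1,0,0,0,0,0,0]]

def P6 : Matrix (Fin 19) (Fin 19) ℤ := Matrix.of ![
    ![17,24,7,7,7,7,7,3,3,3,3,3,5,5,5,5,5,5,5],
    ![24,33,9,9,9,9,9,5,5,5,5,5,7,7,7,7,7,7,7],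
    ![-23,-32,-9,-9,-9,-9,-9,-5,-5,-5,-5,-5,-6,-7,-7,-7,-7,-7,-7],
    ![-7,-10,-2,-2,-3,-3,-3,-1,-1,-1,-1,-1,-3,-2,-2,-2,-2,-2,-2],
    ![0,0,0,0,1,0,0,0,0,0,0,0,0,0,0,0,0,0,0],
    ![-5,-9,-3,-3,-3,-2,-2,-1,-1,-1,-1,-1,-1,-2,-2,-2,-2,-2,-2],
    ![-1,-1,0,0,0,0,0,0,0,0,0,0,-1,0,0,0,0,0,0],
    ![-16,-23,-7,-7,-7,-7,-7,-3,-3,-3,-3,-3,-4,-5,-5,-5,-5,-5,-5],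
    ![-14,-19,-5,-5,-5,-5,-5,-2,-2,-3,-3,-3,-5,-4,-4,-4,-4,-4,-4],
    ![0,0,0,0,0,0,0,0,0,1,0,0,0,0,0,0,0,0,0],
    ![-13,-17,-5,-5,-5,-5,-5,-3,-3,-3,-2,-2,-3,-4,-4,-4,-4,-4,-4],
    ![-1,-1,0,0,0,0,0,0,0,0,0,0,-1,0,0,0,0,0,0],
    ![-40,-56,-16,-16,-16,-16,-16,-8,-8,-8,-8,-8,-11,-12,-12,-12,-12,-12,-12],
    ![-10,-14,-4,-4,-4,-4,-4,-2,-2,-2,-2,-2,-3,-2,-3,-3,-3,-3,-3],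
    ![-10,-14,-4,-4,-4,-4,-4,-2,-2,-2,-2,-2,-3,-3,-2,-3,-3,-3,-3],
    ![-10,-14,-4,-4,-4,-4,-4,-2,-2,-2,-2,-2,-3,-3,-3,-2,-3,-3,-3],
    ![0,0,0,0,0,0,0,0,0,0,0,0,0,0,0,0,1,0,0],
    ![-9,-13,-4,-4,-4,-4,-4,-2,-2,-2,-2,-2,-2,-3,-3,-3,-3,-2,-2],
    ![-1,-1,0,0,0,0,0,0,0,0,0,0,-1,0,0,0,0,0,0]]

def NL : Matrix (Fin 19) (Fin 19) ℤ := Matrix.of ![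
    ![16,24,7,7,7,7,7,3,3,3,3,3,5,5,5,5,5,5,5],
    ![24,32,9,9,9,9,9,5,5,5,5,5,7,7,7,7,7,7,7],
    ![-23,-32,-10,-9,-9,-9,-9,-5,-5,-5,-5,-5,-6,-7,-7,-7,-7,-7,-7],
    ![-7,-10,-2,-3,-3,-3,-3,-1,-1,-1,-1,-1,-3,-2,-2,-2,-2,-2,-2],
    ![0,0,0,0,0,0,0,0,0,0,0,0,0,0,0,0,0,0,0],
    ![-5,-9,-3,-3,-3,-3,-2,-1,-1,-1,-1,-1,-1,-2,-2,-2,-2,-2,-2],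
    ![-1,-1,0,0,0,0,-1,0,0,0,0,0,-1,0,0,0,0,0,0],
    ![-16,-23,-7,-7,-7,-7,-7,-4,-3,-3,-3,-3,-4,-5,-5,-5,-5,-5,-5],
    ![-14,-19,-5,-5,-5,-5,-5,-2,-3,-3,-3,-3,-5,-4,-4,-4,-4,-4,-4],
    ![0,0,0,0,0,0,0,0,0,0,0,0,0,0,0,0,0,0,0],
    ![-13,-17,-5,-5,-5,-5,-5,-3,-3,-3,-3,-2,-3,-4,-4,-4,-4,-4,-4],
    ![-1,-1,0,0,0,0,0,0,0,0,0,-1,-1,0,0,0,0,0,0],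
    ![-40,-56,-16,-16,-16,-16,-16,-8,-8,-8,-8,-8,-12,-12,-12,-12,-12,-12,-12],
    ![-10,-14,-4,-4,-4,-4,-4,-2,-2,-2,-2,-2,-3,-3,-3,-3,-3,-3,-3],
    ![-10,-14,-4,-4,-4,-4,-4,-2,-2,-2,-2,-2,-3,-3,-3,-3,-3,-3,-3],
    ![-10,-14,-4,-4,-4,-4,-4,-2,-2,-2,-2,-2,-3,-3,-3,-3,-3,-3,-3],
    ![0,0,0,0,0,0,0,0,0,0,0,0,0,0,0,0,0,0,0],
    ![-9,-13,-4,-4,-4,-4,-4,-2,-2,-2,-2,-2,-2,-3,-3,-3,-3,-3,-2],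
    ![-1,-1,0,0,0,0,0,0,0,0,0,0,-1,0,0,0,0,0,-1]]

def Q0 : Matrix (Fin 19) (Fin 19) ℤ := Matrix.of ![
    ![56,64,17,17,17,17,17,13,13,13,13,13,15,15,15,15,15,15,15],
    ![64,72,19,19,19,19,19,15,15,15,15,15,17,17,17,17,17,17,17],
    ![-64,-72,-19,-19,-19,-19,-19,-15,-15,-15,-15,-15,-17,-17,-17,-17,-17,-17,-17],
    ![-26,-30,-8,-8,-8,-8,-8,-6,-6,-6,-6,-6,-7,-7,-7,-7,-7,-7,-7],
    ![0,0,0,0,0,0,0,0,0,0,0,0,0,0,0,0,0,0,0],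
    ![-26,-30,-8,-8,-8,-8,-8,-6,-6,-6,-6,-6,-7,-7,-7,-7,-7,-7,-7],
    ![0,0,0,0,0,0,0,0,0,0,0,0,0,0,0,0,0,0,0],
    ![-56,-64,-17,-17,-17,-17,-17,-13,-13,-13,-13,-13,-15,-15,-15,-15,-15,-15,-15],
    ![-34,-38,-10,-10,-10,-10,-10,-8,-8,-8,-8,-8,-9,-9,-9,-9,-9,-9,-9],
    ![0,0,0,0,0,0,0,0,0,0,0,0,0,0,0,0,0,0,0],
    ![-34,-38,-10,-10,-10,-10,-10,-8,-8,-8,-8,-8,-9,-9,-9,-9,-9,-9,-9],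
    ![0,0,0,0,0,0,0,0,0,0,0,0,0,0,0,0,0,0,0],
    ![-120,-136,-36,-36,-36,-36,-36,-28,-28,-28,-28,-28,-32,-32,-32,-32,-32,-32,-32],
    ![-30,-34,-9,-9,-9,-9,-9,-7,-7,-7,-7,-7,-8,-8,-8,-8,-8,-8,-8],
    ![-30,-34,-9,-9,-9,-9,-9,-7,-7,-7,-7,-7,-8,-8,-8,-8,-8,-8,-8],
    ![-30,-34,-9,-9,-9,-9,-9,-7,-7,-7,-7,-7,-8,-8,-8,-8,-8,-8,-8],
    ![0,0,0,0,0,0,0,0,0,0,0,0,0,0,0,0,0,0,0],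
    ![-30,-34,-9,-9,-9,-9,-9,-7,-7,-7,-7,-7,-8,-8,-8,-8,-8,-8,-8],
    ![0,0,0,0,0,0,0,0,0,0,0,0,0,0,0,0,0,0,0]]

def R0 : Matrix (Fin 19) (Fin 19) ℤ := Matrix.of ![
    ![48,48,12,12,12,12,12,12,12,12,12,12,12,12,12,12,12,12,12],
    ![48,48,12,12,12,12,12,12,12,12,12,12,12,12,12,12,12,12,12],
    ![-48,-48,-12,-12,-12,-12,-12,-12,-12,-12,-12,-12,-12,-12,-12,-12,-12,-12,-12],
    ![-24,-24,-6,-6,-6,-6,-6,-6,-6,-6,-6,-6,-6,-6,-6,-6,-6,-6,-6],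
    ![0,0,0,0,0,0,0,0,0,0,0,0,0,0,0,0,0,0,0],
    ![-24,-24,-6,-6,-6,-6,-6,-6,-6,-6,-6,-6,-6,-6,-6,-6,-6,-6,-6],
    ![0,0,0,0,0,0,0,0,0,0,0,0,0,0,0,0,0,0,0],
    ![-48,-48,-12,-12,-12,-12,-12,-12,-12,-12,-12,-12,-12,-12,-12,-12,-12,-12,-12],
    ![-24,-24,-6,-6,-6,-6,-6,-6,-6,-6,-6,-6,-6,-6,-6,-6,-6,-6,-6],
    ![0,0,0,0,0,0,0,0,0,0,0,0,0,0,0,0,0,0,0],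
    ![-24,-24,-6,-6,-6,-6,-6,-6,-6,-6,-6,-6,-6,-6,-6,-6,-6,-6,-6],
    ![0,0,0,0,0,0,0,0,0,0,0,0,0,0,0,0,0,0,0],
    ![-96,-96,-24,-24,-24,-24,-24,-24,-24,-24,-24,-24,-24,-24,-24,-24,-24,-24,-24],
    ![-24,-24,-6,-6,-6,-6,-6,-6,-6,-6,-6,-6,-6,-6,-6,-6,-6,-6,-6],
    ![-24,-24,-6,-6,-6,-6,-6,-6,-6,-6,-6,-6,-6,-6,-6,-6,-6,-6,-6],
    ![-24,-24,-6,-6,-6,-6,-6,-6,-6,-6,-6,-6,-6,-6,-6,-6,-6,-6,-6],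
    ![0,0,0,0,0,0,0,0,0,0,0,0,0,0,0,0,0,0,0],
    ![-24,-24,-6,-6,-6,-6,-6,-6,-6,-6,-6,-6,-6,-6,-6,-6,-6,-6,-6],
    ![0,0,0,0,0,0,0,0,0,0,0,0,0,0,0,0,0,0,0]]

section Aux

set_option maxHeartbeats 4000000

lemma hP2 : M * M = P2 := by decide
lemma hP3 : P2 * M = P3 := by decide
lemma hP4 : P3 * M = P4 := by decide
lemma hP5 : P4 * M = P5 := by decide
lemma hP6 : P5 * M = P6 := by decide
lemma hNLdef : P6 = 1 + NL := by decide
lemma hQ0 : P5 * NL = Q0 := by decide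
lemma hR0 : Q0 * NL = R0 := by decide
lemma hZ0 : R0 * NL = 0 := by decide

lemma bM : ∀ i j, |M i j| ≤ 40 := by decide
lemma bP2 : ∀ i j, |P2 i j| ≤ 40 := by decide
lemma bP3 : ∀ i j, |P3 i j| ≤ 40 := by decide
lemma bP4 : ∀ i j, |P4 i j| ≤ 40 := by decide
lemma bP5 : ∀ i j, |P5 i j| ≤ 40 := by decide
lemma bNL : ∀ i j, |NL i j| ≤ 56 := by decide
lemma bone : ∀ i j : Fin 19, |(1 : Matrix (Fin 19) (Fin 19) ℤ) i j| ≤ 40 := by decide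

end Aux

lemma pow2 : M ^ 2 = P2 := by rw [pow_two, hP2]
lemma pow3 : M ^ 3 = P3 := by rw [pow_succ, pow2, hP3]
lemma pow4 : M ^ 4 = P4 := by rw [pow_succ, pow3, hP4]
lemma pow5 : M ^ 5 = P5 := by rw [pow_succ, pow4, hP5]
lemma pow6 : M ^ 6 = P6 := by rw [pow_succ, pow5, hP6]

lemma hM6 : M ^ 6 = 1 + NL := by rw [pow6, hNLdef]

lemma hnil : M ^ 5 * NL * NL * NL = 0 := by rw [pow5, hQ0, hR0, hZ0]

lemma mul_bound (A B : Matrix (Fin 19) (Fin 19) ℤ) (a b : ℤ)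
    (hA : ∀ i j, |A i j| ≤ a) (hB : ∀ i j, |B i j| ≤ b) (ha : 0 ≤ a) (i j : Fin 19) :
    |(A * B) i j| ≤ 19 * (a * b) := by
  rw [Matrix.mul_apply]
  calc |∑ k, A i k * B k j| ≤ ∑ k, |A i k * B k j| := Finset.abs_sum_le_sum_abs _ _
    _ ≤ ∑ _k : Fin 19, a * b := by
        refine Finset.sum_le_sum fun k _ => ?_
        rw [abs_mul]
        exact mul_le_mul (hA i k) (hB k j) (abs_nonneg _) ha
    _ = 19 * (a * b) := by
        rw [Finset.sum_const, Finset.card_univ, Fintype.card_fin, nsmul_eq_mul]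
        norm_num

lemma bMr : ∀ r : ℕ, r < 6 → ∀ i j, |(M ^ r) i j| ≤ 40 := by
  intro r hr
  interval_cases r
  · rw [pow_zero]; exact bone
  · rw [pow_one]; exact bM
  · rw [pow2]; exact bP2
  · rw [pow3]; exact bP3
  · rw [pow4]; exact bP4
  · rw [pow5]; exact bP5

lemma bA (r : ℕ) (hr : r < 6) (i j : Fin 19) : |(M ^ (5 + r)) i j| ≤ 30400 := by
  have h : M ^ (5 + r) = M ^ 5 * M ^ r := pow_add M 5 r
  rw [h]
  have := mul_bound (M ^ 5) (M ^ r) 40 40 (by rw [pow5]; exact bP5) (bMr r hr) (by norm_num) i j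
  linarith

lemma bB (r : ℕ) (hr : r < 6) (i j : Fin 19) : |(M ^ (5 + r) * NL) i j| ≤ 32345600 := by
  have := mul_bound (M ^ (5 + r)) NL 30400 56 (bA r hr) bNL (by norm_num) i j
  linarith

lemma bC (r : ℕ) (hr : r < 6) (i j : Fin 19) :
    |(M ^ (5 + r) * NL * NL) i j| ≤ 34415718400 := by
  have := mul_bound (M ^ (5 + r) * NL) NL 32345600 56 (bB r hr) bNL (by norm_num) i j
  linarith

lemma key (A : Matrix (Fin 19) (Fin 19) ℤ) (h0 : A * NL * NL * NL = 0) (q : ℕ) :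
    (2 : ℤ) • (A * (M ^ 6) ^ q)
      = (2 : ℤ) • A + (2 * (q : ℤ)) • (A * NL)
        + ((q : ℤ) * ((q : ℤ) - 1)) • (A * NL * NL) := by
  induction q with
  | zero => simp
  | succ q ih =>
      have h6 : (M ^ 6) ^ (q + 1) = (M ^ 6) ^ q * (1 + NL) := by rw [pow_succ, hM6]
      rw [h6, ← mul_assoc, mul_add, mul_one, smul_add]
      have h2 : (2 : ℤ) • (A * (M ^ 6) ^ q * NL)
          = (2 : ℤ) • (A * NL) + (2 * (q : ℤ)) • (A * NL * NL)
            + ((q : ℤ) * ((q : ℤ) - 1)) • (A * NL * NL * NL) := by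
        have := congrArg (· * NL) ih
        simpa [add_mul, smul_mul_assoc, mul_assoc] using this
      rw [ih, h2, h0, smul_zero]
      push_cast
      module

lemma key_entry (r : ℕ) (hr : r < 6) (q : ℕ) (i j : Fin 19) :
    |((M ^ (5 + r) * (M ^ 6) ^ q) i j)|
      ≤ 30400 + 32345600 * (q : ℤ) + 17207859200 * ((q : ℤ) * (q : ℤ)) := by
  have h0 : M ^ (5 + r) * NL * NL * NL = 0 := by
    have h : M ^ (5 + r) = M ^ r * M ^ 5 := by rw [add_comm]; exact pow_add M r 5
    calc M ^ (5 + r) * NL * NL * NL = M ^ r * (M ^ 5 * NL * NL * NL) := by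
          rw [h]; noncomm_ring
      _ = 0 := by rw [hnil, mul_zero]
  have hk := key (M ^ (5 + r)) h0 q
  have he := congrFun (congrFun hk i) j
  simp only [Matrix.add_apply, Matrix.smul_apply, smul_eq_mul] at he
  have hA := bA r hr i j
  have hB := bB r hr i j
  have hC := bC r hr i j
  have hq0 : (0 : ℤ) ≤ (q : ℤ) := Int.ofNat_nonneg q
  have hqq : (0 : ℤ) ≤ (q : ℤ) * ((q : ℤ) - 1) := by
    rcases Nat.eq_zero_or_pos q with h | h
    · simp [h]
    · have : (1 : ℤ) ≤ (q : ℤ) := by exact_mod_cast h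
      nlinarith
  have e1 : |2 * (M ^ (5 + r)) i j| = 2 * |(M ^ (5 + r)) i j| := by
    rw [abs_mul]; norm_num
  have e2 : |2 * (q : ℤ) * (M ^ (5 + r) * NL) i j|
      = 2 * (q : ℤ) * |(M ^ (5 + r) * NL) i j| := by
    rw [abs_mul, abs_of_nonneg (by positivity : (0 : ℤ) ≤ 2 * (q : ℤ))]
  have e3 : |(q : ℤ) * ((q : ℤ) - 1) * (M ^ (5 + r) * NL * NL) i j|
      = (q : ℤ) * ((q : ℤ) - 1) * |(M ^ (5 + r) * NL * NL) i j| := by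
    rw [abs_mul, abs_of_nonneg hqq]
  have habs : 2 * |(M ^ (5 + r) * (M ^ 6) ^ q) i j|
      ≤ 2 * |(M ^ (5 + r)) i j| + 2 * (q : ℤ) * |(M ^ (5 + r) * NL) i j|
        + (q : ℤ) * ((q : ℤ) - 1) * |(M ^ (5 + r) * NL * NL) i j| := by
    have h2X : 2 * |(M ^ (5 + r) * (M ^ 6) ^ q) i j|
        = |2 * (M ^ (5 + r) * (M ^ 6) ^ q) i j| := by rw [abs_mul]; norm_num
    rw [h2X, he]
    calc |2 * (M ^ (5 + r)) i j + 2 * (q : ℤ) * (M ^ (5 + r) * NL) i j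
            + (q : ℤ) * ((q : ℤ) - 1) * (M ^ (5 + r) * NL * NL) i j|
        ≤ |2 * (M ^ (5 + r)) i j| + |2 * (q : ℤ) * (M ^ (5 + r) * NL) i j|
          + |(q : ℤ) * ((q : ℤ) - 1) * (M ^ (5 + r) * NL * NL) i j| :=
          (abs_add_le _ _).trans (by
            have := abs_add_le (2 * (M ^ (5 + r)) i j) (2 * (q : ℤ) * (M ^ (5 + r) * NL) i j)
            linarith)
      _ = _ := by rw [e1, e2, e3]
  have t1 : 2 * (q : ℤ) * |(M ^ (5 + r) * NL) i j| ≤ 2 * (q : ℤ) * 32345600 :=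
    mul_le_mul_of_nonneg_left hB (by positivity)
  have t2 : (q : ℤ) * ((q : ℤ) - 1) * |(M ^ (5 + r) * NL * NL) i j|
      ≤ (q : ℤ) * ((q : ℤ) - 1) * 34415718400 :=
    mul_le_mul_of_nonneg_left hC hqq
  nlinarith [abs_nonneg ((M ^ (5 + r) * (M ^ 6) ^ q) i j)]

lemma int_bound (n : ℕ) (hn : 1 ≤ n) (i j : Fin 19) :
    |(M ^ n) i j| ≤ 68831436800 * (n : ℤ) ^ 2 + 68831436800 := by
  have hn1 : (1 : ℤ) ≤ (n : ℤ) := by exact_mod_cast hn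
  rcases lt_or_ge n 6 with h | h
  · have hb : |(M ^ n) i j| ≤ 40 := bMr n h i j
    nlinarith
  · -- n ≥ 6 ≥ 5
    set m := n - 5 with hm
    have hmn : n = 5 + m := by omega
    have hdm : m = 6 * (m / 6) + m % 6 := (Nat.div_add_mod m 6).symm
    set q := m / 6 with hq
    set r := m % 6 with hr
    have hr6 : r < 6 := Nat.mod_lt _ (by norm_num)
    have hne : n = (5 + r) + 6 * q := by omega
    have hpow : M ^ n = M ^ (5 + r) * (M ^ 6) ^ q := by
      rw [hne, pow_add, pow_mul]
    rw [hpow]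
    have hk := key_entry r hr6 q i j
    have hqn : (q : ℤ) ≤ (n : ℤ) := by
      have : q ≤ n := by omega
      exact_mod_cast this
    have hq0 : (0 : ℤ) ≤ (q : ℤ) := Int.ofNat_nonneg q
    nlinarith [sq_nonneg ((n : ℤ) - (q : ℤ))]

/-- The entries of the iterates of M grow at most quadratically. -/
theorem entries_grow_quadratically :
    ∃ C : ℝ, ∀ n : ℕ, 1 ≤ n → ∀ i j : Fin 19,
      |(((M ^ n) i j : ℤ) : ℝ)| ≤ C * (n : ℝ) ^ 2 + C := by
  refine ⟨68831436800, fun n hn i j => ?_⟩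
  have h := int_bound n hn i j
  have : ((|(M ^ n) i j| : ℤ) : ℝ) ≤ ((68831436800 * (n : ℤ) ^ 2 + 68831436800 : ℤ) : ℝ) := by
    exact_mod_cast h
  push_cast at this
  convert this using 2 <;> push_cast <;> ring
end

section
/- There exists a constant c > 0 such that the (H_a, H_b)-degree component of Mⁿ grows exactly quadratically: for the vector w = H_a + H_b (coefficient vector in ℤ¹⁹), the sum of the first two coordinates of Mⁿ w satisfies c·n² ≤ (coefficient of H_a in Mⁿw) + (coefficient of H_b in Mⁿw) ≤ c⁻¹·n² + c⁻¹ for all n ≥ 1. -/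
/-- The vector H_a + H_b. -/
def w : Fin 19 → ℤ := ![1,1,0,0,0,0,0,0,0,0,0,0,0,0,0,0,0,0,0]


namespace DegreeGrowth

/-- The degree sequence: sum of the first two coordinates of `Mⁿ w`. -/
def fdeg (n : ℕ) : ℤ := (M ^ n).mulVec w 0 + (M ^ n).mulVec w 1

/-- The covector `w ᵥ* Mⁿ`. -/
def cv (n : ℕ) : Fin 19 → ℤ := Matrix.vecMul w (M ^ n)

def sVec : Fin 19 → ℤ := ![24,24,6,6,6,6,6,6,6,6,6,6,6,6,6,6,6,6,6]

def c1 : Fin 19 → ℤ := ![1,4,1,1,1,1,1,0,0,0,0,0,0,1,1,0,0,0,0]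
def c2 : Fin 19 → ℤ := ![4,9,3,3,3,3,3,0,0,0,0,0,1,2,2,1,1,1,1]
def c3 : Fin 19 → ℤ := ![9,17,5,5,5,5,5,1,1,1,1,1,3,3,3,3,3,3,3]
def c4 : Fin 19 → ℤ := ![17,28,8,8,8,8,8,3,3,3,3,3,5,6,6,5,5,5,5]
def c5 : Fin 19 → ℤ := ![28,41,12,12,12,12,12,5,5,5,5,5,8,9,9,8,8,8,8]
def c6 : Fin 19 → ℤ := ![41,57,16,16,16,16,16,8,8,8,8,8,12,12,12,12,12,12,12]

lemma cv_zero : cv 0 = w := by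
  simp [cv, Matrix.vecMul_one]

lemma cv_succ (n : ℕ) : cv (n + 1) = Matrix.vecMul (cv n) M := by
  simp [cv, pow_succ, Matrix.vecMul_vecMul]

lemma cv1 : cv 1 = c1 := by rw [show (1:ℕ) = 0 + 1 from rfl, cv_succ, cv_zero]; decide
lemma cv2 : cv 2 = c2 := by rw [show (2:ℕ) = 1 + 1 from rfl, cv_succ, cv1]; decide
lemma cv3 : cv 3 = c3 := by rw [show (3:ℕ) = 2 + 1 from rfl, cv_succ, cv2]; decide
lemma cv4 : cv 4 = c4 := by rw [show (4:ℕ) = 3 + 1 from rfl, cv_succ, cv3]; decide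
lemma cv5 : cv 5 = c5 := by rw [show (5:ℕ) = 4 + 1 from rfl, cv_succ, cv4]; decide
lemma cv6 : cv 6 = c6 := by rw [show (6:ℕ) = 5 + 1 from rfl, cv_succ, cv5]; decide

lemma sVec_fixed : Matrix.vecMul sVec M = sVec := by decide

/-- Key invariance: the second difference (step 3) of the covectors is the constant
left 1-eigenvector `sVec`. -/
lemma key (n : ℕ) : cv (n + 6) + cv n = cv (n + 3) + cv (n + 3) + sVec := by
  induction n with
  | zero => rw [show (0+6:ℕ) = 6 from rfl, show (0+3:ℕ) = 3 from rfl, cv6, cv_zero, cv3]; decide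
  | succ m ih =>
      have a7 : cv (m + 1 + 6) = Matrix.vecMul (cv (m + 6)) M := by
        rw [show m + 1 + 6 = (m + 6) + 1 by omega]; exact cv_succ _
      have a4 : cv (m + 1 + 3) = Matrix.vecMul (cv (m + 3)) M := by
        rw [show m + 1 + 3 = (m + 3) + 1 by omega]; exact cv_succ _
      have a1 : cv (m + 1) = Matrix.vecMul (cv m) M := cv_succ _
      rw [a7, a4, a1, ← Matrix.add_vecMul, ih, Matrix.add_vecMul, Matrix.add_vecMul,
        sVec_fixed]

lemma dot_w (v : Fin 19 → ℤ) : dotProduct w v = v 0 + v 1 := by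
  simp [w, dotProduct, Fin.sum_univ_succ]

lemma fdeg_eq (n : ℕ) : fdeg n = dotProduct (cv n) w := by
  rw [fdeg, ← dot_w, Matrix.dotProduct_mulVec]; rfl

lemma fdeg0 : fdeg 0 = 2 := by rw [fdeg_eq, cv_zero]; decide
lemma fdeg1 : fdeg 1 = 5 := by rw [fdeg_eq, cv1]; decide
lemma fdeg2 : fdeg 2 = 13 := by rw [fdeg_eq, cv2]; decide
lemma fdeg3 : fdeg 3 = 26 := by rw [fdeg_eq, cv3]; decide
lemma fdeg4 : fdeg 4 = 45 := by rw [fdeg_eq, cv4]; decide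
lemma fdeg5 : fdeg 5 = 69 := by rw [fdeg_eq, cv5]; decide

lemma key_scalar (n : ℕ) : fdeg (n + 6) + fdeg n = 2 * fdeg (n + 3) + 48 := by
  have h := congrArg (fun v => dotProduct v w) (key n)
  simp only [add_dotProduct] at h
  rw [fdeg_eq, fdeg_eq, fdeg_eq]
  have hs : dotProduct sVec w = 48 := by decide
  rw [hs] at h
  linarith [h]

lemma step3 : ∀ n : ℕ, fdeg (n + 3) = fdeg n + 16 * (n : ℤ) + 24 := by
  intro n
  induction n using Nat.strong_induction_on with
  | _ n ih =>
    match n, ih with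
    | 0, _ => rw [fdeg3, fdeg0]; norm_num
    | 1, _ => rw [show (1+3:ℕ) = 4 from rfl, fdeg4, fdeg1]; norm_num
    | 2, _ => rw [show (2+3:ℕ) = 5 from rfl, fdeg5, fdeg2]; norm_num
    | (m + 3), ih =>
      have h1 := ih m (by omega)
      have h2 := key_scalar m
      have e1 : m + 3 + 3 = m + 6 := by omega
      rw [e1]
      push_cast
      linarith

lemma bounds : ∀ n : ℕ, 8 * (n : ℤ) ^ 2 + 6 ≤ 3 * fdeg n ∧ 3 * fdeg n ≤ 8 * (n : ℤ) ^ 2 + 7 := by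
  intro n
  induction n using Nat.strong_induction_on with
  | _ n ih =>
    match n, ih with
    | 0, _ => rw [fdeg0]; norm_num
    | 1, _ => rw [fdeg1]; norm_num
    | 2, _ => rw [fdeg2]; norm_num
    | (m + 3), ih =>
      have h1 := ih m (by omega)
      have h2 := step3 m
      have e : ((m + 3 : ℕ) : ℤ) ^ 2 = (m : ℤ) ^ 2 + 6 * (m : ℤ) + 9 := by push_cast; ring
      rw [e]
      constructor <;> [linarith [h1.1]; linarith [h1.2]]

end DegreeGrowth

/-- The (H_a,H_b)-degree component of Mⁿ(H_a + H_b) grows exactly quadratically. -/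
theorem degree_grows_exactly_quadratically :
    ∃ c : ℝ, 0 < c ∧ ∀ n : ℕ, 1 ≤ n →
      c * (n : ℝ) ^ 2 ≤ ((((M ^ n).mulVec w 0 + (M ^ n).mulVec w 1 : ℤ) : ℝ)) ∧
      ((((M ^ n).mulVec w 0 + (M ^ n).mulVec w 1 : ℤ) : ℝ)) ≤ c⁻¹ * (n : ℝ) ^ 2 + c⁻¹ := by
  refine ⟨1/4, by norm_num, fun n hn => ?_⟩
  have hb := DegreeGrowth.bounds n
  have he : (M ^ n).mulVec w 0 + (M ^ n).mulVec w 1 = DegreeGrowth.fdeg n := rfl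
  rw [he]
  have h1 : (8 * (n : ℝ) ^ 2 + 6) ≤ 3 * ((DegreeGrowth.fdeg n : ℤ) : ℝ) := by
    exact_mod_cast hb.1
  have h2 : 3 * ((DegreeGrowth.fdeg n : ℤ) : ℝ) ≤ 8 * (n : ℝ) ^ 2 + 7 := by
    exact_mod_cast hb.2
  have hn2 : (0 : ℝ) ≤ (n : ℝ) ^ 2 := sq_nonneg _
  constructor
  · nlinarith
  · rw [show ((1:ℝ)/4)⁻¹ = 4 by norm_num]
    nlinarith
end

section
/- The cyclic singularity pattern of period 3 holds: for the map φ with h ≠ 0, the leading Laurent behavior (x₀, x₁, x₂, x₃) = (a, b, ε⁻¹, c ε⁻¹) maps under φ to leading behavior (ε⁻¹, c ε⁻¹, -ε⁻¹, -c ε⁻¹), that maps to (-ε⁻¹, -c ε⁻¹, a', b') with finite a', b' whose limits as ε→0 are a and b respectively, and the third application returns leading behavior (a, b, ε⁻¹, c ε⁻¹). Formally: the third and fourth coordinates of φ(a, b, ε⁻¹, cε⁻¹) equal -ε⁻¹ + O(1) and -cε⁻¹ + O(1) as ε → 0, and the third and fourth coordinates of φ²(a, b, ε⁻¹, cε⁻¹)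 converge to a and b as ε → 0. -/
open Filter Topology Asymptotics

/-- The cyclic singularity pattern of period 3: starting from leading behavior
(a, b, ε⁻¹, cε⁻¹), the third and fourth coordinates of φ are -ε⁻¹ + O(1) and
-cε⁻¹ + O(1), and the third and fourth coordinates of φ² converge to a and b. -/
theorem cyclic_pattern_period_three (h a b c : ℂ) (hh : h ≠ 0) :
    ((fun ε : ℂ => (phi h (a, b, ε⁻¹, c * ε⁻¹)).2.2.1 + ε⁻¹)
      =O[𝓝[≠] (0:ℂ)] (fun _ : ℂ => (1:ℂ))) ∧
    ((fun ε : ℂ => (phi h (a, b, ε⁻¹, c * ε⁻¹)).2.2.2 + c * ε⁻¹)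
      =O[𝓝[≠] (0:ℂ)] (fun _ : ℂ => (1:ℂ))) ∧
    Tendsto (fun ε : ℂ => ((phi h)^[2] (a, b, ε⁻¹, c * ε⁻¹)).2.2.1)
      (𝓝[≠] (0:ℂ)) (𝓝 a) ∧
    Tendsto (fun ε : ℂ => ((phi h)^[2] (a, b, ε⁻¹, c * ε⁻¹)).2.2.2)
      (𝓝[≠] (0:ℂ)) (𝓝 b) := by
  set N : ℂ → ℂ := fun ε => ε*(ε-1) + (ε-1) + a*ε*(ε-1) - h*ε with hNdef
  have hNcont : Continuous N := by fun_prop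
  have hN0 : N 0 = -1 := by simp [hNdef]
  -- eventual hypotheses on the punctured neighborhood
  have hev : ∀ᶠ ε : ℂ in 𝓝[≠] (0:ℂ), ε ≠ 0 ∧ ε - 1 ≠ 0 ∧ N ε ≠ 0 := by
    have h1 : ∀ᶠ ε : ℂ in 𝓝 (0:ℂ), ε - 1 ≠ 0 := by
      have hc : ContinuousAt (fun ε : ℂ => ε - 1) 0 := by fun_prop
      simpa using hc.eventually_ne (by norm_num)
    have h2 : ∀ᶠ ε : ℂ in 𝓝 (0:ℂ), N ε ≠ 0 :=
      hNcont.continuousAt.eventually_ne (by rw [hN0]; norm_num)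
    filter_upwards [self_mem_nhdsWithin, nhdsWithin_le_nhds h1,
      nhdsWithin_le_nhds h2] with ε he h1 h2
    exact ⟨he, h1, h2⟩
  -- explicit formula for the first iterate
  have step1 : ∀ ε : ℂ, ε ≠ 0 → ε - 1 ≠ 0 →
      phi h (a, b, ε⁻¹, c * ε⁻¹)
        = (ε⁻¹, c * ε⁻¹, -ε⁻¹ - a + h/(ε-1),
           -b - c * ε⁻¹ + ε*(2*ε-1+h*c)/(ε-1)^2) := by
    intro ε h0 h1
    have hinv : (1:ℂ) - ε⁻¹ = (ε-1)/ε := by field_simp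
    simp only [phi, hinv, div_pow, div_div_eq_mul_div, Prod.mk.injEq]
    refine ⟨trivial, trivial, ?_, ?_⟩
    · rw [show h * ε⁻¹ * ε = h by field_simp]
    · rw [show (2 - ε⁻¹ + h * (c * ε⁻¹)) * ε ^ 2 = ε * (2*ε-1+h*c) by field_simp]
  -- Part 1
  have e1 : (fun ε : ℂ => (phi h (a, b, ε⁻¹, c * ε⁻¹)).2.2.1 + ε⁻¹)
      =ᶠ[𝓝[≠] (0:ℂ)] (fun ε => -a + h/(ε-1)) := by
    filter_upwards [hev] with ε ⟨h0, h1, h2⟩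
    rw [step1 ε h0 h1]; ring
  have t1 : Tendsto (fun ε : ℂ => -a + h/(ε-1)) (𝓝 (0:ℂ)) (𝓝 (-a + h/(0-1))) :=
    tendsto_const_nhds.add (tendsto_const_nhds.div
      (tendsto_id.sub tendsto_const_nhds) (by norm_num))
  -- Part 2
  have e2 : (fun ε : ℂ => (phi h (a, b, ε⁻¹, c * ε⁻¹)).2.2.2 + c * ε⁻¹)
      =ᶠ[𝓝[≠] (0:ℂ)] (fun ε => -b + ε*(2*ε-1+h*c)/(ε-1)^2) := by
    filter_upwards [hev] with ε ⟨h0, h1, h2⟩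
    rw [step1 ε h0 h1]; ring
  have t2 : Tendsto (fun ε : ℂ => -b + ε*(2*ε-1+h*c)/(ε-1)^2) (𝓝 (0:ℂ))
      (𝓝 (-b + 0*(2*0-1+h*c)/((0:ℂ)-1)^2)) := by
    refine tendsto_const_nhds.add (Tendsto.div ?_ ?_ (by norm_num))
    · exact Continuous.tendsto (by fun_prop) 0
    · exact Continuous.tendsto (by fun_prop) 0
  -- second iterate formulas
  have e3 : (fun ε : ℂ => ((phi h)^[2] (a, b, ε⁻¹, c * ε⁻¹)).2.2.1)
      =ᶠ[𝓝[≠] (0:ℂ)]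
      (fun ε => a - h/(ε-1) + h*(-(ε-1) - a*ε*(ε-1) + h*ε)/(N ε)) := by
    filter_upwards [hev] with ε ⟨h0, h1, h2⟩
    simp only [Function.iterate_succ, Function.iterate_zero, Function.comp_apply, id_eq]
    rw [step1 ε h0 h1]
    set A : ℂ := -ε⁻¹ - a + h/(ε-1) with hA
    have h1A : 1 - A = N ε / (ε*(ε-1)) := by
      rw [hA, hNdef]; field_simp; ring
    simp only [phi, h1A, div_div_eq_mul_div]
    rw [show h * A * (ε*(ε-1)) = h*(-(ε-1) - a*ε*(ε-1) + h*ε) by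
      rw [hA]; field_simp]
    ring
  have t3 : Tendsto (fun ε : ℂ => a - h/(ε-1) + h*(-(ε-1) - a*ε*(ε-1) + h*ε)/(N ε))
      (𝓝 (0:ℂ)) (𝓝 a) := by
    have key : Tendsto (fun ε : ℂ => a - h/(ε-1) + h*(-(ε-1) - a*ε*(ε-1) + h*ε)/(N ε))
        (𝓝 (0:ℂ)) (𝓝 (a - h/((0:ℂ)-1) + h*(-((0:ℂ)-1) - a*0*((0:ℂ)-1) + h*0)/(N 0))) := by
      refine Tendsto.add (tendsto_const_nhds.sub (tendsto_const_nhds.div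
        (tendsto_id.sub tendsto_const_nhds) (by norm_num))) (Tendsto.div ?_ ?_ ?_)
      · exact Continuous.tendsto (by fun_prop) 0
      · exact hNcont.continuousAt
      · rw [hN0]; norm_num
    convert key using 2
    rw [hN0]; ring_nf
  -- Part 4
  have e4 : (fun ε : ℂ => ((phi h)^[2] (a, b, ε⁻¹, c * ε⁻¹)).2.2.2)
      =ᶠ[𝓝[≠] (0:ℂ)]
      (fun ε => b - ε*(2*ε-1+h*c)/(ε-1)^2 +
        ((2+a-h*b)*ε^2*(ε-1)^2 + ε*(ε-1)^2 - h*ε^2*(ε-1) - h*c*ε*(ε-1)^2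
          + h*ε^3*(2*ε-1+h*c))/(N ε)^2) := by
    filter_upwards [hev] with ε ⟨h0, h1, h2⟩
    simp only [Function.iterate_succ, Function.iterate_zero, Function.comp_apply, id_eq]
    rw [step1 ε h0 h1]
    set A : ℂ := -ε⁻¹ - a + h/(ε-1) with hA
    set B : ℂ := -b - c * ε⁻¹ + ε*(2*ε-1+h*c)/(ε-1)^2 with hB
    have h1A : 1 - A = N ε / (ε*(ε-1)) := by
      rw [hA, hNdef]; field_simp; ring
    simp only [phi, h1A, div_pow, div_div_eq_mul_div]
    rw [show (2 - A + h * B) * (ε*(ε-1))^2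
        = (2+a-h*b)*ε^2*(ε-1)^2 + ε*(ε-1)^2 - h*ε^2*(ε-1) - h*c*ε*(ε-1)^2
          + h*ε^3*(2*ε-1+h*c) by
      rw [hA, hB]; field_simp; ring_nf; all_goals tauto]
    rw [hB]; ring
  have t4 : Tendsto (fun ε : ℂ => b - ε*(2*ε-1+h*c)/(ε-1)^2 +
        ((2+a-h*b)*ε^2*(ε-1)^2 + ε*(ε-1)^2 - h*ε^2*(ε-1) - h*c*ε*(ε-1)^2
          + h*ε^3*(2*ε-1+h*c))/(N ε)^2) (𝓝 (0:ℂ)) (𝓝 b) := by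
    have key : Tendsto (fun ε : ℂ => b - ε*(2*ε-1+h*c)/(ε-1)^2 +
        ((2+a-h*b)*ε^2*(ε-1)^2 + ε*(ε-1)^2 - h*ε^2*(ε-1) - h*c*ε*(ε-1)^2
          + h*ε^3*(2*ε-1+h*c))/(N ε)^2) (𝓝 (0:ℂ))
        (𝓝 (b - 0*(2*0-1+h*c)/((0:ℂ)-1)^2 +
        ((2+a-h*b)*0^2*((0:ℂ)-1)^2 + 0*((0:ℂ)-1)^2 - h*0^2*((0:ℂ)-1) - h*c*0*((0:ℂ)-1)^2
          + h*0^3*(2*0-1+h*c))/(N 0)^2)) := by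
      refine Tendsto.add (Tendsto.sub tendsto_const_nhds (Tendsto.div ?_ ?_ (by norm_num)))
        (Tendsto.div ?_ ?_ ?_)
      · exact Continuous.tendsto (by fun_prop) 0
      · exact Continuous.tendsto (by fun_prop) 0
      · exact Continuous.tendsto (by fun_prop) 0
      · exact (hNcont.pow 2).continuousAt
      · rw [hN0]; norm_num
    convert key using 2
    rw [hN0]; ring_nf
  refine ⟨?_, ?_, ?_, ?_⟩
  · exact ((t1.mono_left nhdsWithin_le_nhds).congr' e1.symm).isBigO_one ℂ
  · exact ((t2.mono_left nhdsWithin_le_nhds).congr' e2.symm).isBigO_one ℂ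
  · exact (t3.mono_left nhdsWithin_le_nhds).congr' e3.symm
  · exact (t4.mono_left nhdsWithin_le_nhds).congr' e4.symm
end
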